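/- arXiv:1302.4841 — 2 statements merged into one kernel-verified Lean document; each statement's English description precedes it below -/
import Mathlib

section
/- Let J be a set of cardinality λ, let n < ω, let μ ≤ λ be a cardinal and θ an infinite cardinal with λ → (μ)ⁿ_θ, and let κ be a cardinal such that θ^{<κ} = θ. Then the ideal ER^n_{J,μ,θ} is κ-complete: the union of any family of fewer than κ members of ER^n_{J,μ,θ} belongs to ER^n_{J,μ,θ}. -/
open Cardinal

universe u

/-- `c` is constant on `[s]^n`, the family of `n`-element subsets of `s`. -/
def ConstOnN {J : Type u} {β : Type v} (c : Set J → β) (s : Set J) (n : ℕ) : Prop :=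
  ∀ t₁ t₂ : Set J, t₁ ⊆ s → t₂ ⊆ s → t₁.Finite → t₂.Finite →
    t₁.ncard = n → t₂.ncard = n → c t₁ = c t₂

/-- The partition relation `λ → (μ)ⁿ_θ`: for every set `J` of cardinality `λ` and every
colouring of the `n`-element subsets of `J` by at most `θ` colours there is `H ⊆ J` of
cardinality `μ` on whose `n`-element subsets the colouring is constant. -/
def PartitionRel (lam μ : Cardinal.{u}) (n : ℕ) (θ : Cardinal.{u}) : Prop :=
  ∀ (J : Type u), #J = lam → ∀ (β : Type u), #β ≤ θ → ∀ c : Set J → β,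
    ∃ H : Set J, #H = μ ∧ ConstOnN c H n

/-- The ideal `ER^n_{J,μ,θ}` on `[J]^μ`: a family `𝒮` of `μ`-element subsets of `J` is
in the ideal iff there is a colouring `𝐜` of the subsets of `J` of size `≤ n` by at most
`θ` colours such that no `s ∈ 𝒮` has `𝐜` constant on `[s]^n`. -/
def ERIdeal (J : Type u) (n : ℕ) (μ θ : Cardinal.{u}) : Set (Set (Set J)) :=
  {S | (∀ s ∈ S, #s = μ) ∧
    ∃ (β : Type u) (c : Set J → β), #β ≤ θ ∧ ∀ s ∈ S, ¬ ConstOnN c s n}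

/-!
Colour each set by the tuple of its colours under colourings witnessing membership of the
given families. A set on which the tuple colouring is constant is monochromatic for every
component, so the tuple colouring witnesses membership of the union; it uses at most
`θ ^ #ι ≤ θ ^< κ = θ` colours.
-/

theorem ConstOnN.comp {J : Type u} {β γ : Type*} {c : Set J → β} {s : Set J} {n : ℕ}
    (g : β → γ) (h : ConstOnN c s n) : ConstOnN (g ∘ c) s n :=
  fun t₁ t₂ h₁ h₂ f₁ f₂ n₁ n₂ => congrArg g (h t₁ t₂ h₁ h₂ f₁ f₂ n₁ n₂)

theorem Cardinal.mk_pi_le_powerlt {ι : Type u} {β : ι → Type u} {θ κ : Cardinal.{u}}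
    (hβ : ∀ i, #(β i) ≤ θ) (hι : #ι < κ) : #(∀ i, β i) ≤ θ ^< κ :=
  calc #(∀ i, β i) = prod fun i => #(β i) := mk_pi β
    _ ≤ prod fun _ : ι => θ := prod_le_prod _ _ hβ
    _ = θ ^ #ι := prod_const' ι θ
    _ ≤ θ ^< κ := le_powerlt θ hι

theorem stmt_10_general {J : Type u} (μ θ κ : Cardinal.{u}) (n : ℕ)
    (hpow : θ ^< κ = θ) :
    ∀ (ι : Type u) (f : ι → Set (Set J)), #ι < κ →
      (∀ i, f i ∈ ERIdeal J n μ θ) → (⋃ i, f i) ∈ ERIdeal J n μ θ := by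
  intro ι f hι hf
  choose β c hβ hc using fun i => (hf i).2
  refine ⟨fun s hs => ?_, ∀ i, β i, fun s i => c i s, hpow ▸ mk_pi_le_powerlt hβ hι,
    fun s hs hconst => ?_⟩
  all_goals obtain ⟨i, hi⟩ := Set.mem_iUnion.1 hs
  · exact (hf i).1 s hi
  · exact hc i s hi (hconst.comp (Function.eval i))

theorem stmt_10 {J : Type u} (lam μ θ κ : Cardinal.{u}) (n : ℕ)
    (hJ : #J = lam) (hμ : μ ≤ lam) (hθ : ℵ₀ ≤ θ)
    (hpart : PartitionRel lam μ n θ)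
    (hpow : θ ^< κ = θ) :
    ∀ (ι : Type u) (f : ι → Set (Set J)), #ι < κ →
      (∀ i, f i ∈ ERIdeal J n μ θ) → (⋃ i, f i) ∈ ERIdeal J n μ θ :=
  stmt_10_general μ θ κ n hpow
end

section
/- Let μ be a cardinal, let θ < ∂ be cardinals with ∂ regular, ∂ > 2^θ, and 2^θ ≤ μ, and let I be a linear order of cardinality μ satisfying: (i) for every I₀ ⊆ I with |I₀| ≤ θ, the set {t ∈ I \ I₀ : no t' ∈ I \ I₀ with t' ≠ t realizes the same cut of I₀ as t} has cardinality ≤ 2^θ; (ii) for all a < b in I, I order-embeds into the open interval (a, b); (iii) every linear order of cardinality ≤ θ order-embeds into I; (iv) I contains a strictly increasing sequence of length μ and a strictly decreasing sequence of length μ. Then (A) implies (B), where (A): I₀ ⊆ I with |I₀| ≤ θ; I₁ is a linear order extending I₀; ⟨u_n : n < ω⟩ is an increasing sequence of subsets of θ with union θ; ⟨t̄¹_α : α < ∂⟩ with t̄¹_α ∈ ^θI₁ is a sequence indiscernible over I₀ in I₁ (for quantifier-free formulas); and for every n, the suborder I_{1,n} of I₁ with universe {t¹_{α,i} : i ∈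 u_n, α < ∂} ∪ I₀ order-embeds into I over I₀; and (B): there is a sequence ⟨t̄_α : α < μ⟩ with t̄_α ∈ ^θI, indiscernible over I₀ in I, such that for every n < ω the quantifier-free type of t̄₀⌢…⌢t̄_n over I₀ in I equals the quantifier-free type of t̄¹₀⌢…⌢t̄¹_n over I₀ in I₁. -/
open Cardinal

universe u v w

/-- `t` and `t'` realize the same cut of `I₀`. -/
def SameCut {I : Type u} [LinearOrder I] (I₀ : Set I) (t t' : I) : Prop :=
  ∀ s ∈ I₀, (s < t ↔ s < t')

/-- Property (i): for every `I₀ ⊆ I` of size `≤ θ`, the set of elements of `I \ I₀`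
realizing a cut of `I₀` realized by no other element of `I \ I₀` has size `≤ 2^θ`. -/
def CutIsolatedSmall (I : Type u) [LinearOrder I] (θ : Cardinal.{u}) : Prop :=
  ∀ I₀ : Set I, #I₀ ≤ θ →
    #{t : I | t ∉ I₀ ∧ ∀ t' : I, t' ∉ I₀ → t' ≠ t → ¬ SameCut I₀ t t'} ≤ 2 ^ θ

/-- Property (ii): `I` order-embeds into each of its nonempty open intervals. -/
def SelfEmbedsIntervals (I : Type u) [LinearOrder I] : Prop :=
  ∀ a b : I, a < b → Nonempty (I ↪o (Set.Ioo a b))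

/-- Property (iii): every linear order of cardinality `≤ θ` order-embeds into `I`. -/
def UnivForSmall (I : Type u) [LinearOrder I] (θ : Cardinal.{u}) : Prop :=
  ∀ (A : Type u) [LinearOrder A], #A ≤ θ → Nonempty (A ↪o I)

/-- Property (iv): `I` contains strictly increasing and strictly decreasing sequences
of length `μ`. -/
def LongMonotone (I : Type u) [LinearOrder I] (μ : Cardinal.{u}) : Prop :=
  (∃ f : μ.ord.ToType → I, StrictMono f) ∧ (∃ f : μ.ord.ToType → I, StrictAnti f)

/-- Property (v): for every linear order `A` of cardinality `≤ θ`, the lexicographic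
product `I ×ₗ A` order-embeds into `I`. -/
def LexAbsorb (I : Type u) [LinearOrder I] (θ : Cardinal.{u}) : Prop :=
  ∀ (A : Type u) [LinearOrder A], #A ≤ θ → Nonempty (Lex (I × A) ↪o I)

/-- Two `ι`-indexed tuples of elements of the linear order `β` realize the same
quantifier-free type over the subset `B ⊆ β`: corresponding entries stand in the same
order relations with each other and with each element of `B`. -/
def SameQfType {β : Type u} [LinearOrder β] (B : Set β) {ι : Type v}
    (x y : ι → β) : Prop :=
  (∀ i j, x i < x j ↔ y i < y j) ∧ (∀ i j, x i = x j ↔ y i = y j) ∧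
  (∀ i, ∀ b ∈ B, ((x i < b ↔ y i < b) ∧ (b < x i ↔ b < y i) ∧ (x i = b ↔ y i = b)))

/-- A tuple `x` in the linear order `β` (over the subset `B ⊆ β`) and a tuple `y` in the
linear order `γ` (over the copy `e '' B` of `B`) realize the same quantifier-free type:
corresponding entries stand in the same order relations with each other and with the
corresponding copies of each element of `B`. -/
def SameQfType2 {β : Type u} {γ : Type w} [LinearOrder β] [LinearOrder γ]
    (B : Set β) (e : B → γ) {ι : Type v} (x : ι → β) (y : ι → γ) : Prop :=
  (∀ i j, x i < x j ↔ y i < y j) ∧ (∀ i j, x i = x j ↔ y i = y j) ∧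
  (∀ i (b : B), ((x i < (b : β) ↔ y i < e b) ∧ ((b : β) < x i ↔ e b < y i) ∧
    (x i = (b : β) ↔ y i = e b)))

/-- `⟨t̄_α : α < bound⟩` is an indiscernible sequence of `Θ`-tuples in the linear
order `β` over `B` (for quantifier-free formulas). -/
def IndiscBdd {β : Type u} [LinearOrder β] (B : Set β) {Θ : Type v}
    (bound : Ordinal.{w}) (t : Ordinal.{w} → Θ → β) : Prop :=
  ∀ (n : ℕ) (a b : Fin n → Ordinal.{w}),
    (∀ k, a k < bound) → (∀ k, b k < bound) → StrictMono a → StrictMono b →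
      SameQfType B (fun q : Fin n × Θ => t (a q.1) q.2)
        (fun q : Fin n × Θ => t (b q.1) q.2)

/-- `⟨t̄_s : s ∈ A⟩` is an indiscernible sequence of `Θ`-tuples in the linear order `β`
over `B` (for quantifier-free formulas), indexed by the linear order `A`. -/
def IndiscIdx {β : Type u} [LinearOrder β] (B : Set β) {A : Type v} [LinearOrder A]
    {Θ : Type w} (t : A → Θ → β) : Prop :=
  ∀ (n : ℕ) (a b : Fin n → A), StrictMono a → StrictMono b →
    SameQfType B (fun q : Fin n × Θ => t (a q.1) q.2)
      (fun q : Fin n × Θ => t (b q.1) q.2)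

/-!
By indiscernibility, how `t¹_{m,i}` compares with `t¹_{n,j}` and with `I₀` depends only on
`cmp m n`, and any family in `I` indexed by `μ` that realizes this pattern and the right cuts over
`I₀` is as required.

Call `i` before `j` when all values `t¹_{m,i}` lie below all values `t¹_{n,j}`; columns that are
not comparable this way form blocks. Within a block the columns are all constant, all increasing
or all decreasing in `m`, and two entries compare lexicographically by (index, order of
`t¹_{0,·}`), with the index reversed for decreasing columns. Such lexicographic orders on
`μ × I` embed into `I` between consecutive terms of the monotone sequences of length `μ` from (iv),
using (ii); the blocks get disjoint intervals through (iii). Finally each column is moved, by (ii)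
again, into the set of points of `I` realizing its cut over `I₀`: the embeddings of (A)(f) show
that this set is nonempty, and has two points unless the cut holds a single value of `t¹`.
-/

section Cmp

variable {α β : Type*} [LinearOrder α] [LinearOrder β]

theorem cmp_eq_cmp_of_lt_iff {a b : α} {c d : β} (h₁ : a < b ↔ c < d) (h₂ : b < a ↔ d < c) :
    cmp a b = cmp c d := by
  simp only [cmp, cmpUsing, h₁, h₂]

theorem cmp_eq_cmp_of_le_iff {a b : α} {c d : β} (h₁ : a ≤ b ↔ c ≤ d) (h₂ : b ≤ a ↔ d ≤ c) :
    cmp a b = cmp c d :=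
  cmp_eq_cmp_of_lt_iff (by rw [← not_le, ← not_le, h₂]) (by rw [← not_le, ← not_le, h₁])

theorem cmp_toLex (a a' : α) (b b' : β) :
    cmp (toLex (a, b)) (toLex (a', b')) = (cmp a a').then (cmp b b') := by
  rcases lt_trichotomy a a' with h | rfl | h
  · simp [h.cmp_eq_lt, Prod.Lex.toLex_lt_toLex, h]
  · simp only [cmp_self_eq_eq, Ordering.eq_then]
    exact cmp_eq_cmp_of_lt_iff (by simp [Prod.Lex.toLex_lt_toLex])
      (by simp [Prod.Lex.toLex_lt_toLex])
  · simp [h.cmp_eq_gt, Prod.Lex.toLex_lt_toLex, h]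

theorem exists_cmp_eq_cmp_one (m n : ℕ) : ∃ l, cmp m n = cmp 1 l := by
  rcases lt_trichotomy m n with h | rfl | h
  · exact ⟨2, by rw [h.cmp_eq_lt]; rfl⟩
  · exact ⟨1, by rw [cmp_self_eq_eq]; rfl⟩
  · exact ⟨0, by rw [h.cmp_eq_gt]; rfl⟩

/-- The product of signs, reading `lt, eq, gt` as `-1, 0, 1`. -/
def twistCmp : Ordering → Ordering → Ordering
  | .lt, o => o
  | .eq, _ => .eq
  | .gt, o => o.swap

end Cmp

section QfType

variable {β : Type u} [LinearOrder β] {B : Set β} {ι : Type v} {x y : ι → β}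

theorem SameQfType.cmp_eq (h : SameQfType B x y) (i j : ι) :
    cmp (x i) (x j) = cmp (y i) (y j) :=
  cmp_eq_cmp_of_lt_iff (h.1 i j) (h.1 j i)

theorem SameQfType.cmp_eq_of_mem (h : SameQfType B x y) (i : ι) {b : β} (hb : b ∈ B) :
    cmp (x i) b = cmp (y i) b :=
  cmp_eq_cmp_of_lt_iff (h.2.2 i b hb).1 (h.2.2 i b hb).2.1

theorem sameQfType_of_cmp_eq (h₁ : ∀ i j, cmp (x i) (x j) = cmp (y i) (y j))
    (h₂ : ∀ i, ∀ b ∈ B, cmp (x i) b = cmp (y i) b) : SameQfType B x y :=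
  ⟨fun i j => lt_iff_lt_of_cmp_eq_cmp (h₁ i j), fun i j => eq_iff_eq_of_cmp_eq_cmp (h₁ i j),
    fun i b hb => ⟨lt_iff_lt_of_cmp_eq_cmp (h₂ i b hb),
      lt_iff_lt_of_cmp_eq_cmp (cmp_eq_cmp_symm.1 (h₂ i b hb)),
      eq_iff_eq_of_cmp_eq_cmp (h₂ i b hb)⟩⟩

theorem sameQfType2_of_cmp_eq {γ : Type w} [LinearOrder γ] {e : B → γ} {z : ι → γ}
    (h₁ : ∀ i j, cmp (x i) (x j) = cmp (z i) (z j))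
    (h₂ : ∀ i (b : B), cmp (x i) b = cmp (z i) (e b)) : SameQfType2 B e x z :=
  ⟨fun i j => lt_iff_lt_of_cmp_eq_cmp (h₁ i j), fun i j => eq_iff_eq_of_cmp_eq_cmp (h₁ i j),
    fun i b => ⟨lt_iff_lt_of_cmp_eq_cmp (h₂ i b),
      lt_iff_lt_of_cmp_eq_cmp (cmp_eq_cmp_symm.1 (h₂ i b)), eq_iff_eq_of_cmp_eq_cmp (h₂ i b)⟩⟩

end QfType

section Pattern

variable {Θ β : Type*} [LinearOrder β]

def RealizesPattern {A γ : Type*} [LinearOrder A] [LinearOrder γ] (T : ℕ → Θ → β)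
    (y : A → Θ → γ) : Prop :=
  ∀ ⦃α α' : A⦄ ⦃m m' : ℕ⦄, cmp α α' = cmp m m' →
    ∀ i j, cmp (y α i) (y α' j) = cmp (T m i) (T m' j)

def IsOrderIndiscernible (T : ℕ → Θ → β) : Prop :=
  RealizesPattern T T

def Precedes (T : ℕ → Θ → β) (i j : Θ) : Prop :=
  ∀ m n, T m i < T n j

def direction (T : ℕ → Θ → β) (i : Θ) : Ordering :=
  cmp (T 0 i) (T 1 i)

section IndiscBdd

variable {B : Set β} {o : Ordinal.{w}} {t : Ordinal.{w} → Θ → β}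

theorem IndiscBdd.cmp_eq_of_lt (h : IndiscBdd B o t) (hω : ∀ n : ℕ, (n : Ordinal) < o)
    {m n m' n' : ℕ} (hmn : m < n) (hmn' : m' < n') (i j : Θ) :
    cmp (t m i) (t n j) = cmp (t m' i) (t n' j) ∧ cmp (t n i) (t m j) = cmp (t n' i) (t m' j) := by
  have H := h 2 ![m, n] ![m', n'] (by simp [Fin.forall_fin_two, hω])
    (by simp [Fin.forall_fin_two, hω]) (by simp [Fin.strictMono_iff_lt_succ, hmn])
    (by simp [Fin.strictMono_iff_lt_succ, hmn'])
  exact ⟨by simpa using H.cmp_eq (0, i) (1, j), by simpa using H.cmp_eq (1, i) (0, j)⟩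

theorem IndiscBdd.sameQfType_single (h : IndiscBdd B o t) (hω : ∀ n : ℕ, (n : Ordinal) < o)
    (m m' : ℕ) : SameQfType B (fun q : Fin 1 × Θ => t m q.2) (fun q => t m' q.2) := by
  simpa using h 1 ![m] ![m'] (by simp [hω]) (by simp [hω])
    (by simp [Fin.strictMono_iff_lt_succ]) (by simp [Fin.strictMono_iff_lt_succ])

theorem IndiscBdd.isOrderIndiscernible (h : IndiscBdd B o t) (hω : ∀ n : ℕ, (n : Ordinal) < o) :
    IsOrderIndiscernible fun n : ℕ => t n := by
  intro m n m' n' hmn i j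
  rcases lt_trichotomy m n with hlt | rfl | hgt
  · exact (h.cmp_eq_of_lt hω hlt (by rwa [← cmp_eq_lt_iff, ← hmn, cmp_eq_lt_iff]) i j).1
  · obtain rfl : m' = n' := by rwa [cmp_self_eq_eq, eq_comm, cmp_eq_eq_iff] at hmn
    exact (h.sameQfType_single hω m m').cmp_eq (0, i) (0, j)
  · exact (h.cmp_eq_of_lt hω hgt (by rwa [← cmp_eq_gt_iff, ← hmn, cmp_eq_gt_iff]) i j).2

theorem IndiscBdd.cmp_eq_of_mem (h : IndiscBdd B o t) (hω : ∀ n : ℕ, (n : Ordinal) < o)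
    (m m' : ℕ) (i : Θ) {b : β} (hb : b ∈ B) : cmp (t m i) b = cmp (t m' i) b :=
  (h.sameQfType_single hω m m').cmp_eq_of_mem (0, i) hb

end IndiscBdd

end Pattern

namespace IsOrderIndiscernible

variable {Θ β : Type*} [LinearOrder β] {T : ℕ → Θ → β} {i j k : Θ}

theorem lt_iff (hT : IsOrderIndiscernible T) {m n m' n' : ℕ} (h : cmp m n = cmp m' n') :
    T m i < T n j ↔ T m' i < T n' j :=
  lt_iff_lt_of_cmp_eq_cmp (hT h i j)

theorem le_iff (hT : IsOrderIndiscernible T) {m n m' n' : ℕ} (h : cmp m n = cmp m' n') :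
    T m i ≤ T n j ↔ T m' i ≤ T n' j :=
  le_iff_le_of_cmp_eq_cmp (hT h i j)

theorem eq_iff (hT : IsOrderIndiscernible T) {m n m' n' : ℕ} (h : cmp m n = cmp m' n') :
    T m i = T n j ↔ T m' i = T n' j :=
  eq_iff_eq_of_cmp_eq_cmp (hT h i j)

theorem cmp_eq_of_lt (hT : IsOrderIndiscernible T) {m n : ℕ} (h : m < n) :
    cmp (T m i) (T n j) = cmp (T 0 i) (T 1 j) :=
  hT (by rw [h.cmp_eq_lt]; rfl) i j

theorem cmp_eq_of_eq (hT : IsOrderIndiscernible T) (m : ℕ) :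
    cmp (T m i) (T m j) = cmp (T 0 i) (T 0 j) :=
  hT (by rw [cmp_self_eq_eq, cmp_self_eq_eq]) i j

theorem cmp_eq_of_gt (hT : IsOrderIndiscernible T) {m n : ℕ} (h : n < m) :
    cmp (T m i) (T n j) = cmp (T 1 i) (T 0 j) :=
  hT (by rw [h.cmp_eq_gt]; rfl) i j

theorem precedes_of_lt (hT : IsOrderIndiscernible T) (h₀₁ : T 0 i < T 1 j)
    (h₀₀ : T 0 i < T 0 j) (h₁₀ : T 1 i < T 0 j) : Precedes T i j := by
  intro m n
  rw [← cmp_eq_lt_iff]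
  rcases lt_trichotomy m n with h | rfl | h
  · rw [hT.cmp_eq_of_lt h, h₀₁.cmp_eq_lt]
  · rw [hT.cmp_eq_of_eq, h₀₀.cmp_eq_lt]
  · rw [hT.cmp_eq_of_gt h, h₁₀.cmp_eq_lt]

theorem precedes_of_forall_lt (hT : IsOrderIndiscernible T) (h : ∀ n, T 1 i < T n j) :
    Precedes T i j :=
  hT.precedes_of_lt ((hT.lt_iff (by decide)).2 (h 2)) ((hT.lt_iff (by decide)).2 (h 1)) (h 0)

theorem not_precedes_self : ¬Precedes T i i :=
  fun h => lt_irrefl _ (h 0 0)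

theorem _root_.Precedes.not_precedes (h : Precedes T i j) : ¬Precedes T j i :=
  fun h' => lt_asymm (h 0 0) (h' 0 0)

theorem _root_.Precedes.trans (hij : Precedes T i j) (hjk : Precedes T j k) : Precedes T i k :=
  fun m n => (hij m 0).trans (hjk 0 n)

theorem precedes_or_precedes (hT : IsOrderIndiscernible T) (h : Precedes T i j) (k : Θ) :
    Precedes T i k ∨ Precedes T k j := by
  refine or_iff_not_imp_left.2 fun hik => hT.precedes_of_forall_lt fun n => ?_
  obtain ⟨m, m', hle⟩ : ∃ m m', T m' k ≤ T m i := by simpa [Precedes] using hik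
  obtain ⟨l, hl⟩ := exists_cmp_eq_cmp_one m' m
  exact ((hT.le_iff hl).1 hle).trans_lt (h l n)

theorem apply_eq_apply_zero (hT : IsOrderIndiscernible T) (h : T 0 i = T 1 i) (m : ℕ) :
    T m i = T 0 i := by
  cases m with
  | zero => rfl
  | succ m => exact (hT.eq_iff (by rw [m.succ_pos.cmp_eq_gt]; rfl)).2 h.symm

theorem apply_zero_eq_apply_one_of_eq (hT : IsOrderIndiscernible T) (h : T 0 i = T 1 j) :
    T 0 j = T 1 j := by
  have h₂ : T 0 i = T 2 j := (hT.eq_iff (by decide)).1 h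
  exact (hT.eq_iff (by decide)).2 (h.symm.trans h₂)

theorem eq_of_not_precedes (hT : IsOrderIndiscernible T) (hi : T 0 i = T 1 i)
    (hij : ¬Precedes T i j) (hji : ¬Precedes T j i) (m n : ℕ) : T m i = T n j := by
  have key (m n : ℕ) : cmp (T m i) (T n j) = cmp (T 0 i) (T 0 j) := by
    calc cmp (T m i) (T n j) = cmp (T n i) (T n j) := by
          rw [hT.apply_eq_apply_zero hi m, hT.apply_eq_apply_zero hi n]
      _ = cmp (T 0 i) (T 0 j) := hT.cmp_eq_of_eq n
  rcases hc : cmp (T 0 i) (T 0 j)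
  · exact absurd (fun m n => (cmp_eq_lt_iff _ _).1 ((key m n).trans hc)) hij
  · exact (cmp_eq_eq_iff _ _).1 ((key m n).trans hc)
  · exact absurd (fun n m => (cmp_eq_gt_iff _ _).1 ((key m n).trans hc)) hji

theorem lt_of_not_precedes_of_lt (hT : IsOrderIndiscernible T) (hi : T 0 i < T 1 i)
    (hj : T 0 j < T 1 j) (hji : ¬Precedes T j i) : T 0 i < T 1 j := by
  by_contra! hle
  have hlt : T 1 j < T 0 i :=
    hle.lt_of_ne fun heq => hj.ne (hT.apply_zero_eq_apply_one_of_eq heq.symm)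
  exact hji (hT.precedes_of_lt ((hj.trans hlt).trans hi) (hj.trans hlt) hlt)

theorem lt_of_not_precedes_of_gt (hT : IsOrderIndiscernible T) (hi : T 1 i < T 0 i)
    (hj : T 1 j < T 0 j) (hij : ¬Precedes T i j) : T 1 j < T 0 i := by
  by_contra! hle
  have hlt : T 0 i < T 1 j := hle.lt_of_ne fun heq => hj.ne' (hT.apply_zero_eq_apply_one_of_eq heq)
  exact hij (hT.precedes_of_lt hlt (hlt.trans hj) (hi.trans (hlt.trans hj)))

theorem precedes_or_precedes_of_lt_of_gt (hT : IsOrderIndiscernible T) (hi : T 0 i < T 1 i)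
    (hj : T 1 j < T 0 j) : Precedes T i j ∨ Precedes T j i := by
  have hj₂ : T 2 j < T 1 j := (hT.lt_iff (by decide)).1 hj
  rcases le_or_gt (T 1 i) (T 2 j) with h | h
  · exact .inl (hT.precedes_of_lt ((hi.trans_le h).trans hj₂)
      ((hi.trans_le h).trans (hj₂.trans hj)) (h.trans_lt (hj₂.trans hj)))
  · have h₁₀ : T 1 j < T 0 i := (hT.lt_iff (by decide)).1 h
    have h₀₀ : T 0 j < T 0 i := (hT.lt_iff (by decide)).1 (h₁₀.trans hi)
    exact .inr (hT.precedes_of_lt (h₀₀.trans hi) h₀₀ h₁₀)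

theorem direction_eq (hT : IsOrderIndiscernible T) (hij : ¬Precedes T i j)
    (hji : ¬Precedes T j i) : direction T i = direction T j := by
  unfold direction
  by_cases hi : T 0 i = T 1 i
  · have h := hT.eq_of_not_precedes hi hij hji
    rw [(cmp_eq_eq_iff _ _).2 hi, (cmp_eq_eq_iff _ _).2 ((h 0 0).symm.trans (h 0 1))]
  by_cases hj : T 0 j = T 1 j
  · have h := hT.eq_of_not_precedes hj hji hij
    rw [(cmp_eq_eq_iff _ _).2 hj, (cmp_eq_eq_iff _ _).2 ((h 0 0).symm.trans (h 0 1))]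
  rcases lt_or_gt_of_ne hi with hi | hi <;> rcases lt_or_gt_of_ne hj with hj | hj
  · rw [hi.cmp_eq_lt, hj.cmp_eq_lt]
  · exact ((hT.precedes_or_precedes_of_lt_of_gt hi hj).elim hij hji).elim
  · exact ((hT.precedes_or_precedes_of_lt_of_gt hj hi).elim hji hij).elim
  · rw [hi.cmp_eq_gt, hj.cmp_eq_gt]

theorem cmp_eq_twistCmp (hT : IsOrderIndiscernible T) (hij : ¬Precedes T i j)
    (hji : ¬Precedes T j i) (m n : ℕ) :
    cmp (T m i) (T n j) = (twistCmp (direction T i) (cmp m n)).then (cmp (T 0 i) (T 0 j)) := by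
  have hdir := hT.direction_eq hij hji
  unfold direction at hdir ⊢
  rcases hd : cmp (T 0 i) (T 1 i) <;> rw [hd] at hdir
  · have hi := (cmp_eq_lt_iff _ _).1 hd
    have hj := (cmp_eq_lt_iff _ _).1 hdir.symm
    rcases lt_trichotomy m n with h | rfl | h
    · rw [h.cmp_eq_lt, hT.cmp_eq_of_lt h, (hT.lt_of_not_precedes_of_lt hi hj hji).cmp_eq_lt]
      rfl
    · rw [cmp_self_eq_eq, hT.cmp_eq_of_eq]
      rfl
    · rw [h.cmp_eq_gt, hT.cmp_eq_of_gt h, (hT.lt_of_not_precedes_of_lt hj hi hij).cmp_eq_gt]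
      rfl
  · have h := hT.eq_of_not_precedes ((cmp_eq_eq_iff _ _).1 hd) hij hji
    rw [(cmp_eq_eq_iff _ _).2 (h m n), (cmp_eq_eq_iff _ _).2 (h 0 0)]
    rfl
  · have hi := (cmp_eq_gt_iff _ _).1 hd
    have hj := (cmp_eq_gt_iff _ _).1 hdir.symm
    rcases lt_trichotomy m n with h | rfl | h
    · rw [h.cmp_eq_lt, hT.cmp_eq_of_lt h, (hT.lt_of_not_precedes_of_gt hi hj hij).cmp_eq_gt]
      rfl
    · rw [cmp_self_eq_eq, hT.cmp_eq_of_eq]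
      rfl
    · rw [h.cmp_eq_gt, hT.cmp_eq_of_gt h, (hT.lt_of_not_precedes_of_gt hj hi hji).cmp_eq_lt]
      rfl

end IsOrderIndiscernible

namespace SelfEmbedsIntervals

variable {I : Type u} [LinearOrder I]

theorem infinite [Nontrivial I] (hI : SelfEmbedsIntervals I) : Infinite I := by
  obtain ⟨a, b, hab⟩ := exists_pair_lt I
  obtain ⟨e⟩ := hI a b hab
  refine not_finite_iff_infinite.mp fun _ => ?_
  have hinj : Function.Injective fun x => (e x : I) := Subtype.val_injective.comp e.injective
  obtain ⟨x, hx⟩ := Finite.injective_iff_surjective.mp hinj a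
  exact (e x).2.1.ne' hx

theorem exists_strictMono_Ioo (hI : SelfEmbedsIntervals I) :
    ∃ E : I → I → I → I, ∀ a b, a < b → StrictMono (E a b) ∧ ∀ x, E a b x ∈ Set.Ioo a b := by
  classical
  refine ⟨fun a b x => if hab : a < b then (hI a b hab).some x else x, fun a b hab => ?_⟩
  simp only [dif_pos hab]
  exact ⟨fun x y hxy => (hI a b hab).some.strictMono hxy, fun x => ((hI a b hab).some x).2⟩

theorem exists_strictMono_lex (hI : SelfEmbedsIntervals I) {A : Type*} [LinearOrder A]
    {a b : A → I} (hab : ∀ α, a α < b α) (hsep : ∀ α β, α < β → b α ≤ a β) :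
    ∃ L : Lex (A × I) → I, StrictMono L := by
  obtain ⟨E, hE⟩ := hI.exists_strictMono_Ioo
  refine ⟨fun p => E (a (ofLex p).1) (b (ofLex p).1) (ofLex p).2, ?_⟩
  rintro ⟨α, v⟩ ⟨β, w⟩ hlt
  rcases Prod.Lex.toLex_lt_toLex.1 hlt with h | ⟨rfl, h⟩
  · exact (((hE _ _ (hab α)).2 v).2.trans_le (hsep α β h)).trans ((hE _ _ (hab β)).2 w).1
  · exact (hE _ _ (hab α)).1 h

theorem exists_strictMono_lex_of_strictMono (hI : SelfEmbedsIntervals I) {A : Type*}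
    [LinearOrder A] [SuccOrder A] [NoMaxOrder A] {f : A → I} (hf : StrictMono f) :
    ∃ L : Lex (A × I) → I, StrictMono L :=
  hI.exists_strictMono_lex (a := f) (b := fun α => f (Order.succ α))
    (fun α => hf (Order.lt_succ α)) fun _ _ h => hf.monotone (Order.succ_le_of_lt h)

theorem exists_strictMono_lex_of_strictAnti (hI : SelfEmbedsIntervals I) {A : Type*}
    [LinearOrder A] [SuccOrder A] [NoMaxOrder A] {f : A → I} (hf : StrictAnti f) :
    ∃ L : Lex (Aᵒᵈ × I) → I, StrictMono L :=
  hI.exists_strictMono_lex (a := fun α => f (Order.succ (OrderDual.ofDual α)))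
    (b := fun α => f (OrderDual.ofDual α)) (fun _ => hf (Order.lt_succ _))
    fun _ _ h => hf.antitone (Order.succ_le_of_lt h)

theorem exists_strictMono_mapsTo (hI : SelfEmbedsIntervals I) :
    ∃ φ : Set I → I → I, ∀ R : Set I, R.OrdConnected → R.Nonempty →
      (∀ x, φ R x ∈ R) ∧ (R.Nontrivial → StrictMono (φ R)) := by
  obtain ⟨E, hE⟩ := hI.exists_strictMono_Ioo
  have (R : Set I) : ∃ φ : I → I, R.OrdConnected → R.Nonempty →
      (∀ x, φ x ∈ R) ∧ (R.Nontrivial → StrictMono φ) := by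
    by_cases hR : R.Nontrivial
    · obtain ⟨a, ha, b, hb, hab⟩ := hR.exists_lt
      exact ⟨E a b, fun hc _ => ⟨fun x => hc.out ha hb (Set.Ioo_subset_Icc_self ((hE a b hab).2 x)),
        fun _ => (hE a b hab).1⟩⟩
    by_cases hne : R.Nonempty
    · exact ⟨fun _ => hne.some, fun _ _ => ⟨fun _ => hne.some_mem, fun h => absurd h hR⟩⟩
    · exact ⟨id, fun _ h => absurd h hne⟩
  choose φ hφ using this
  exact ⟨φ, hφ⟩

end SelfEmbedsIntervals

namespace UnivForSmall

variable {I : Type u} [LinearOrder I] {θ : Cardinal.{u}}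

theorem mul_natCast [Infinite I] (hI : UnivForSmall I θ) (n : ℕ) : UnivForSmall I (θ * n) := by
  intro E _ hE
  rcases le_or_gt ℵ₀ θ with hθ | hθ
  · exact hI E (hE.trans ((mul_le_mul_right ((natCast_lt_aleph0 (n := n)).le.trans hθ) θ).trans
      (mul_eq_self hθ).le))
  · have : Finite E := lt_aleph0_iff_finite.mp (hE.trans_lt (mul_lt_aleph0 hθ (natCast_lt_aleph0)))
    exact nonempty_orderEmbedding_of_finite_infinite E I

theorem exists_le_iff_of_total (hI : UnivForSmall I θ) {T : Type u} (hT : #T ≤ θ) (r : T → T → Prop)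
    (htrans : ∀ a b c, r a b → r b c → r a c) (htotal : ∀ a b, r a b ∨ r b a) :
    ∃ h : T → I, ∀ a b, h a ≤ h b ↔ r a b := by
  let _ : Preorder T := { le := r, le_refl := fun a => (htotal a a).elim id id, le_trans := htrans }
  have : @Std.Total T (· ≤ ·) := ⟨htotal⟩
  classical
  obtain ⟨e⟩ := hI (Antisymmetrization T (· ≤ ·)) (mk_quotient_le.trans hT)
  exact ⟨fun a => e (toAntisymmetrization (· ≤ ·) a), fun a b =>
    e.le_iff_le.trans toAntisymmetrization_le_toAntisymmetrization_iff⟩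

end UnivForSmall

namespace IsOrderIndiscernible

variable {I Θ : Type u} [LinearOrder I] {β : Type*} [LinearOrder β] {T : ℕ → Θ → β}

theorem exists_blockIntervals (hT : IsOrderIndiscernible T) (hI : UnivForSmall I (#Θ * 2)) :
    ∃ a b : Θ → I, (∀ i, a i < b i) ∧ (∀ i j, Precedes T i j → b i < a j) ∧
      ∀ i j, ¬Precedes T i j → ¬Precedes T j i → a i = a j ∧ b i = b j := by
  -- order `Θ × Bool` by block, then by the flag: each block gets two points of `I`
  obtain ⟨h, hh⟩ := hI.exists_le_iff_of_total (T := Θ × Bool) (by simp [mk_prod])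
    (fun p q => Precedes T p.1 q.1 ∨ (¬Precedes T q.1 p.1 ∧ p.2 ≤ q.2))
    (by
      rintro ⟨i, b⟩ ⟨j, b'⟩ ⟨k, b''⟩ (hij | ⟨hji, hb⟩) (hjk | ⟨hkj, hb'⟩)
      · exact Or.inl (hij.trans hjk)
      · exact Or.inl ((hT.precedes_or_precedes hij k).resolve_right hkj)
      · exact Or.inl ((hT.precedes_or_precedes hjk i).resolve_left hji)
      · exact Or.inr ⟨fun hki => (hT.precedes_or_precedes hki j).elim hkj hji, hb.trans hb'⟩)
    (by
      rintro ⟨i, b⟩ ⟨j, b'⟩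
      by_cases hij : Precedes T i j
      · exact Or.inl (Or.inl hij)
      by_cases hji : Precedes T j i
      · exact Or.inr (Or.inl hji)
      rcases le_total b b' with hb | hb
      exacts [Or.inl (Or.inr ⟨hji, hb⟩), Or.inr (Or.inr ⟨hij, hb⟩)])
  refine ⟨fun i => h (i, false), fun i => h (i, true), fun i => ?_, fun i j hij => ?_,
    fun i j hij hji => ?_⟩
  · refine lt_of_le_not_ge ((hh _ _).2 (Or.inr ⟨not_precedes_self, Bool.false_le _⟩)) ?_
    intro hle
    rcases (hh _ _).1 hle with h | ⟨-, h⟩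
    exacts [not_precedes_self h, absurd h (by simp)]
  · refine lt_of_le_not_ge ((hh _ _).2 (Or.inl hij)) ?_
    intro hle
    rcases (hh _ _).1 hle with h | ⟨h, -⟩
    exacts [hij.not_precedes h, h hij]
  · exact ⟨le_antisymm ((hh _ _).2 (Or.inr ⟨hji, le_rfl⟩)) ((hh _ _).2 (Or.inr ⟨hij, le_rfl⟩)),
      le_antisymm ((hh _ _).2 (Or.inr ⟨hji, le_rfl⟩)) ((hh _ _).2 (Or.inr ⟨hij, le_rfl⟩))⟩

end IsOrderIndiscernible

section Placement

variable {A I : Type*} [LinearOrder A] [LinearOrder I]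

def placement (Linc : Lex (A × I) → I) (Ldec : Lex (Aᵒᵈ × I) → I) : Ordering → A → I → I
  | .lt, α, v => Linc (toLex (α, v))
  | .eq, _, v => v
  | .gt, α, v => Ldec (toLex (OrderDual.toDual α, v))

theorem cmp_placement {Linc : Lex (A × I) → I} (hinc : StrictMono Linc)
    {Ldec : Lex (Aᵒᵈ × I) → I} (hdec : StrictMono Ldec) (d : Ordering) (α α' : A) (v v' : I) :
    cmp (placement Linc Ldec d α v) (placement Linc Ldec d α' v') =
      (twistCmp d (cmp α α')).then (cmp v v') := by
  cases d
  · rw [placement, placement, hinc.cmp_map_eq, cmp_toLex]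
    rfl
  · rfl
  · rw [placement, placement, hdec.cmp_map_eq, cmp_toLex, cmp_toDual, twistCmp, cmp_swap]

end Placement

theorem IsOrderIndiscernible.exists_realizesPattern {I Θ : Type u} [LinearOrder I] {β : Type*}
    [LinearOrder β] {T : ℕ → Θ → β} (hT : IsOrderIndiscernible T) (hii : SelfEmbedsIntervals I)
    (huniv : UnivForSmall I (#Θ * 2)) {A : Type*} [LinearOrder A] {Linc : Lex (A × I) → I}
    (hinc : StrictMono Linc) {Ldec : Lex (Aᵒᵈ × I) → I} (hdec : StrictMono Ldec) :
    ∃ z : A → Θ → I, RealizesPattern T z := by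
  obtain ⟨E, hE⟩ := hii.exists_strictMono_Ioo
  obtain ⟨a, b, hab, hsep, hblock⟩ := hT.exists_blockIntervals huniv
  obtain ⟨g, hg⟩ := huniv.exists_le_iff_of_total (T := Θ) (le_mul_of_one_le_right' (by norm_num))
    (fun i j => T 0 i ≤ T 0 j) (fun _ _ _ => le_trans) fun _ _ => le_total _ _
  refine ⟨fun α i => E (a i) (b i) (placement Linc Ldec (direction T i) α (g i)), ?_⟩
  intro α α' m m' h i j
  by_cases hij : Precedes T i j
  · rw [(hij m m').cmp_eq_lt]
    exact ((((hE _ _ (hab i)).2 _).2.trans (hsep i j hij)).trans ((hE _ _ (hab j)).2 _).1).cmp_eq_lt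
  by_cases hji : Precedes T j i
  · rw [(hji m' m).cmp_eq_gt]
    exact ((((hE _ _ (hab j)).2 _).2.trans (hsep j i hji)).trans ((hE _ _ (hab i)).2 _).1).cmp_eq_gt
  obtain ⟨ha, hb⟩ := hblock i j hij hji
  dsimp only
  rw [ha, hb, (hE _ _ (hab j)).1.cmp_map_eq, hT.direction_eq hij hji, cmp_placement hinc hdec,
    hT.cmp_eq_twistCmp hij hji, hT.direction_eq hij hji, h,
    cmp_eq_cmp_of_le_iff (hg i j) (hg j i)]

section CutRealizers

variable {I : Type u} [LinearOrder I] {I₀ : Set I} {I₁ : Type*} [LinearOrder I₁] (e₀ : I₀ ↪o I₁)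

def cutRealizers (x : I₁) : Set I :=
  {y | ∀ s : I₀, cmp y s = cmp x (e₀ s)}

variable {e₀}

theorem ordConnected_cutRealizers (x : I₁) : (cutRealizers e₀ x).OrdConnected := by
  refine ⟨fun y hy y' hy' w hw s => ?_⟩
  rcases hc : cmp x (e₀ s)
  · exact (cmp_eq_lt_iff _ _).2 (hw.2.trans_lt ((cmp_eq_lt_iff _ _).1 ((hy' s).trans hc)))
  · have h₁ := (cmp_eq_eq_iff _ _).1 ((hy s).trans hc)
    have h₂ := (cmp_eq_eq_iff _ _).1 ((hy' s).trans hc)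
    exact (cmp_eq_eq_iff _ _).2 (le_antisymm (h₂ ▸ hw.2) (h₁ ▸ hw.1))
  · exact (cmp_eq_gt_iff _ _).2 (((cmp_eq_gt_iff _ _).1 ((hy s).trans hc)).trans_le hw.1)

theorem cutRealizers_congr {x x' : I₁} (h : ∀ s, cmp x (e₀ s) = cmp x' (e₀ s)) :
    cutRealizers e₀ x = cutRealizers e₀ x' := by
  simp only [cutRealizers, h]

theorem lt_of_mem_cutRealizers {x x' : I₁} (hxx' : x < x')
    (hcut : ¬∀ s, cmp x (e₀ s) = cmp x' (e₀ s)) {y y' : I} (hy : y ∈ cutRealizers e₀ x)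
    (hy' : y' ∈ cutRealizers e₀ x') : y < y' := by
  obtain ⟨s, hs⟩ := not_forall.1 hcut
  rcases hc : cmp x (e₀ s) <;> rw [hc] at hs
  · have hys : y < s := (cmp_eq_lt_iff _ _).1 ((hy s).trans hc)
    exact hys.trans_le (not_lt.1 fun h => hs ((hy' s).symm.trans ((cmp_eq_lt_iff _ _).2 h)).symm)
  · have hys : y = s := (cmp_eq_eq_iff _ _).1 ((hy s).trans hc)
    rw [hys, ← cmp_eq_gt_iff, hy' s, cmp_eq_gt_iff, ← (cmp_eq_eq_iff _ _).1 hc]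
    exact hxx'
  · exact (hs ((cmp_eq_gt_iff _ _).2 (((cmp_eq_gt_iff _ _).1 hc).trans hxx')).symm).elim

theorem mem_cutRealizers_of_strictMonoOn {S : Set I₁} {f : I₁ → I} (hf : StrictMonoOn f S)
    (hS : Set.range e₀ ⊆ S) (hfix : ∀ s, f (e₀ s) = s) {x : I₁} (hx : x ∈ S) :
    f x ∈ cutRealizers e₀ x := fun s => by
  rw [← hfix s, hf.cmp_map_eq hx (hS ⟨s, rfl⟩)]

end CutRealizers

theorem RealizesPattern.exists_realizesPattern_cutRealizers {I Θ : Type u} [LinearOrder I]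
    {I₀ : Set I} {I₁ : Type*} [LinearOrder I₁] {e₀ : I₀ ↪o I₁} {T : ℕ → Θ → I₁}
    {A : Type*} [LinearOrder A] {z : A → Θ → I} (hz : RealizesPattern T z)
    (hii : SelfEmbedsIntervals I) (hTcut : ∀ m i s, cmp (T m i) (e₀ s) = cmp (T 0 i) (e₀ s))
    (hpair : ∀ m n i j, ∃ f : I₁ → I,
      StrictMonoOn f (Set.range e₀ ∪ {T m i, T n j}) ∧ ∀ s, f (e₀ s) = s) :
    ∃ y : A → Θ → I, RealizesPattern T y ∧ ∀ α i, y α i ∈ cutRealizers e₀ (T 0 i) := by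
  obtain ⟨φ, hφ⟩ := hii.exists_strictMono_mapsTo
  have hR (m : ℕ) (i : Θ) : cutRealizers e₀ (T m i) = cutRealizers e₀ (T 0 i) :=
    cutRealizers_congr (hTcut m i)
  have hpair' (m n i j) : ∃ f : I₁ → I, f (T m i) ∈ cutRealizers e₀ (T 0 i) ∧
      f (T n j) ∈ cutRealizers e₀ (T 0 j) ∧ cmp (f (T m i)) (f (T n j)) = cmp (T m i) (T n j) := by
    obtain ⟨f, hf, hfix⟩ := hpair m n i j
    have hsub : Set.range e₀ ⊆ Set.range e₀ ∪ {T m i, T n j} := Set.subset_union_left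
    refine ⟨f, hR m i ▸ mem_cutRealizers_of_strictMonoOn hf hsub hfix (by simp),
      hR n j ▸ mem_cutRealizers_of_strictMonoOn hf hsub hfix (by simp),
      hf.cmp_map_eq (by simp) (by simp)⟩
  have hφR (i : Θ) := hφ _ (ordConnected_cutRealizers (T 0 i))
    (let ⟨f, hf, _⟩ := hpair' 0 0 i i; ⟨_, hf⟩)
  refine ⟨fun α i => φ (cutRealizers e₀ (T 0 i)) (z α i), ?_, fun α i => (hφR i).1 _⟩
  intro α α' m n h i j
  by_cases hcut : ∀ s, cmp (T m i) (e₀ s) = cmp (T n j) (e₀ s)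
  · have hRij : cutRealizers e₀ (T 0 i) = cutRealizers e₀ (T 0 j) := by
      rw [← hR m i, ← hR n j, cutRealizers_congr hcut]
    dsimp only
    rw [hRij]
    by_cases hnt : (cutRealizers e₀ (T 0 j)).Nontrivial
    · rw [((hφR j).2 hnt).cmp_map_eq, hz h]
    -- `f` keeps distinct values of `T` apart inside the cut, so `T m i = T n j` here
    obtain ⟨f, hfi, hfj, hf⟩ := hpair' m n i j
    have hsub := Set.not_nontrivial_iff.1 hnt
    rw [hRij] at hfi
    rw [← hf, hsub hfi hfj, hsub ((hφR j).1 (z α i)) ((hφR j).1 (z α' j)), cmp_self_eq_eq,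
      cmp_self_eq_eq]
  rcases lt_trichotomy (T m i) (T n j) with hlt | heq | hgt
  · rw [hlt.cmp_eq_lt]
    exact (lt_of_mem_cutRealizers hlt hcut ((hR m i).symm ▸ (hφR i).1 _)
      ((hR n j).symm ▸ (hφR j).1 _)).cmp_eq_lt
  · exact absurd (fun s => by rw [heq]) hcut
  · rw [hgt.cmp_eq_gt]
    exact (lt_of_mem_cutRealizers hgt (fun h => hcut fun s => (h s).symm)
      ((hR n j).symm ▸ (hφR j).1 _) ((hR m i).symm ▸ (hφR i).1 _)).cmp_eq_gt

theorem RealizesPattern.exists_indiscBdd {I Θ : Type u} [LinearOrder I] {I₀ : Set I}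
    {I₁ : Type*} [LinearOrder I₁] {e₀ : I₀ ↪o I₁} {T : ℕ → Θ → I₁} {o : Ordinal.{u}}
    (hω : ∀ n : ℕ, (n : Ordinal) < o) {y : o.ToType → Θ → I} (hy : RealizesPattern T y)
    (hycut : ∀ α i, y α i ∈ cutRealizers e₀ (T 0 i))
    (hTcut : ∀ m i s, cmp (T m i) (e₀ s) = cmp (T 0 i) (e₀ s)) :
    ∃ t2 : Ordinal.{u} → Θ → I, IndiscBdd I₀ o t2 ∧
      ∀ n : ℕ, SameQfType2 I₀ (fun b => e₀ b)
        (fun q : Fin (n + 1) × Θ => t2 ((q.1 : ℕ) : Ordinal.{u}) q.2)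
        (fun q : Fin (n + 1) × Θ => T q.1 q.2) := by
  classical
  let ι : Ordinal → o.ToType := fun α =>
    if h : α < o then Ordinal.ToType.mk ⟨α, h⟩ else Ordinal.ToType.mk ⟨0, by simpa using hω 0⟩
  have hι {α β : Ordinal} (hα : α < o) (hβ : β < o) : cmp (ι α) (ι β) = cmp α β := by
    simp only [ι, dif_pos hα, dif_pos hβ, Ordinal.ToType.mk.strictMono.cmp_map_eq]
    exact cmp_eq_cmp_of_lt_iff Iff.rfl Iff.rfl
  have key {α β : Ordinal} (hα : α < o) (hβ : β < o) {m n : ℕ} (h : cmp α β = cmp m n) (i j : Θ) :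
      cmp (y (ι α) i) (y (ι β) j) = cmp (T m i) (T n j) :=
    hy ((hι hα hβ).trans h) i j
  refine ⟨fun α => y (ι α), fun n a b ha hb hma hmb => sameQfType_of_cmp_eq (fun q r => ?_)
    (fun q s hs => ?_), fun n => sameQfType2_of_cmp_eq (fun q r => ?_) (fun q s => ?_)⟩
  · have hFin {c : Fin n → Ordinal} (hc : StrictMono c) :
        cmp (c q.1) (c r.1) = cmp (q.1 : ℕ) r.1 := by
      rw [hc.cmp_map_eq, Fin.val_strictMono.cmp_map_eq]
    rw [key (ha _) (ha _) (hFin hma), key (hb _) (hb _) (hFin hmb)]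
  · exact (hycut _ _ ⟨s, hs⟩).trans (hycut _ _ ⟨s, hs⟩).symm
  · exact key (hω _) (hω _) (Nat.strictMono_cast.cmp_map_eq _ _) _ _
  · exact (hycut _ _ s).trans (hTcut _ _ s).symm

theorem stmt_12_general (μ θ par : Cardinal.{u}) (I : Type u) [LinearOrder I]
    (hreg : par.IsRegular) (h2θμ : 2 ^ θ ≤ μ)
    (hI : #I = μ)
    -- the properties (i)–(iv) of `I`
    (hii : SelfEmbedsIntervals I)
    (hiii : UnivForSmall I θ) (hiv : LongMonotone I μ)
    -- (A)(a),(b): `I₀ ⊆ I` of cardinality `≤ θ`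
    (I₀ : Set I)
    -- (A)(c): `I₁` is a linear order extending `I₀`
    (I₁ : Type u) [LinearOrder I₁] (e₀ : I₀ ↪o I₁)
    -- the index set of the `θ`-tuples
    (Θ : Type u) (hΘ : #Θ = θ)
    -- (A)(d): `u_n ⊆ u_{n+1} ⊆ θ = ⋃ₙ u_n`
    (u : ℕ → Set Θ) (humono : Monotone u) (huunion : (⋃ n, u n) = Set.univ)
    -- (A)(e): `⟨t̄¹_α : α < ∂⟩` is an indiscernible sequence in `I₁` over `I₀`
    (t1 : Ordinal.{u} → Θ → I₁)
    (hind : IndiscBdd (Set.range e₀) par.ord t1)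
    -- (A)(f): for every `n`, `I_{1,n}` order-embeds into `I` over `I₀`
    (hemb : ∀ n : ℕ, ∃ f : I₁ → I,
      (∀ x y : I₁,
        (x ∈ Set.range e₀ ∪ {z | ∃ α < par.ord, ∃ i ∈ u n, z = t1 α i}) →
        (y ∈ Set.range e₀ ∪ {z | ∃ α < par.ord, ∃ i ∈ u n, z = t1 α i}) →
        (x < y ↔ f x < f y)) ∧
      ∀ s : I₀, f (e₀ s) = (s : I)) :
    -- (B): there is an indiscernible sequence `⟨t̄_α : α < μ⟩` in `I` over `I₀`
    -- realizing the same finite quantifier-free types over `I₀` as `⟨t̄¹_α : α < ∂⟩`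
    ∃ t2 : Ordinal.{u} → Θ → I,
      IndiscBdd I₀ μ.ord t2 ∧
      ∀ n : ℕ, SameQfType2 I₀ (fun b => e₀ b)
        (fun q : Fin (n + 1) × Θ => t2 ((q.1 : ℕ) : Ordinal.{u}) q.2)
        (fun q : Fin (n + 1) × Θ => t1 ((q.1 : ℕ) : Ordinal.{u}) q.2) := by
  rcases isEmpty_or_nonempty Θ with hΘ₀ | hΘ₀
  · exact ⟨fun _ => isEmptyElim, fun _ _ _ _ _ _ _ => sameQfType_of_cmp_eq
      (fun q => isEmptyElim q.2) fun q => isEmptyElim q.2,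
      fun _ => sameQfType2_of_cmp_eq (fun q => isEmptyElim q.2) fun q => isEmptyElim q.2⟩
  have : Nontrivial I := by
    rw [← one_lt_iff_nontrivial, hI]
    exact (Cardinal.one_le_iff_ne_zero.2 (hΘ ▸ mk_ne_zero Θ)).trans_lt ((cantor θ).trans_le h2θμ)
  have : Infinite I := hii.infinite
  have hμ : ℵ₀ ≤ μ := hI ▸ aleph0_le_mk I
  have : NoMaxOrder μ.ord.ToType := Cardinal.noMaxOrder hμ
  have hω {c : Cardinal.{u}} (hc : ℵ₀ ≤ c) (n : ℕ) : (n : Ordinal) < c.ord :=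
    lt_ord.2 (by simpa using natCast_lt_aleph0.trans_le hc)
  let T : ℕ → Θ → I₁ := fun m => t1 m
  have hTcut (m i s) : cmp (T m i) (e₀ s) = cmp (T 0 i) (e₀ s) :=
    hind.cmp_eq_of_mem (hω hreg.aleph0_le) m 0 i ⟨s, rfl⟩
  have hpair (m n i j) : ∃ f : I₁ → I,
      StrictMonoOn f (Set.range e₀ ∪ {T m i, T n j}) ∧ ∀ s, f (e₀ s) = s := by
    obtain ⟨a, ha⟩ := Set.mem_iUnion.1 (huunion ▸ Set.mem_univ i)
    obtain ⟨b, hb⟩ := Set.mem_iUnion.1 (huunion ▸ Set.mem_univ j)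
    obtain ⟨f, hf, hfix⟩ := hemb (max a b)
    have hsub : Set.range e₀ ∪ {T m i, T n j} ⊆
        Set.range e₀ ∪ {z | ∃ α < par.ord, ∃ i ∈ u (max a b), z = t1 α i} :=
      Set.union_subset_union_right _ (Set.insert_subset_iff.2
      ⟨⟨m, hω hreg.aleph0_le m, i, humono (le_max_left a b) ha, rfl⟩,
        Set.singleton_subset_iff.2 ⟨n, hω hreg.aleph0_le n, j, humono (le_max_right a b) hb, rfl⟩⟩)
    exact ⟨f, fun x hx y hy hxy => (hf x y (hsub hx) (hsub hy)).1 hxy, hfix⟩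
  obtain ⟨Linc, hinc⟩ := hii.exists_strictMono_lex_of_strictMono hiv.1.choose_spec
  obtain ⟨Ldec, hdec⟩ := hii.exists_strictMono_lex_of_strictAnti hiv.2.choose_spec
  obtain ⟨z, hz⟩ := (hind.isOrderIndiscernible (hω hreg.aleph0_le)).exists_realizesPattern hii
    (by simpa [hΘ] using hiii.mul_natCast 2) hinc hdec
  obtain ⟨y, hy, hycut⟩ := hz.exists_realizesPattern_cutRealizers hii hTcut hpair
  exact hy.exists_indiscBdd (hω hμ) hycut hTcut

theorem stmt_12 (μ θ par : Cardinal.{u}) (I : Type u) [LinearOrder I]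
    (hθpar : θ < par) (hreg : par.IsRegular) (h2θpar : 2 ^ θ < par) (h2θμ : 2 ^ θ ≤ μ)
    (hI : #I = μ)
    -- the properties (i)–(iv) of `I`
    (hi : CutIsolatedSmall I θ) (hii : SelfEmbedsIntervals I)
    (hiii : UnivForSmall I θ) (hiv : LongMonotone I μ)
    -- (A)(a),(b): `I₀ ⊆ I` of cardinality `≤ θ`
    (I₀ : Set I) (hI₀ : #I₀ ≤ θ)
    -- (A)(c): `I₁` is a linear order extending `I₀`
    (I₁ : Type u) [LinearOrder I₁] (e₀ : I₀ ↪o I₁)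
    -- the index set of the `θ`-tuples
    (Θ : Type u) (hΘ : #Θ = θ)
    -- (A)(d): `u_n ⊆ u_{n+1} ⊆ θ = ⋃ₙ u_n`
    (u : ℕ → Set Θ) (humono : Monotone u) (huunion : (⋃ n, u n) = Set.univ)
    -- (A)(e): `⟨t̄¹_α : α < ∂⟩` is an indiscernible sequence in `I₁` over `I₀`
    (t1 : Ordinal.{u} → Θ → I₁)
    (hind : IndiscBdd (Set.range e₀) par.ord t1)
    -- (A)(f): for every `n`, `I_{1,n}` order-embeds into `I` over `I₀`
    (hemb : ∀ n : ℕ, ∃ f : I₁ → I,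
      (∀ x y : I₁,
        (x ∈ Set.range e₀ ∪ {z | ∃ α < par.ord, ∃ i ∈ u n, z = t1 α i}) →
        (y ∈ Set.range e₀ ∪ {z | ∃ α < par.ord, ∃ i ∈ u n, z = t1 α i}) →
        (x < y ↔ f x < f y)) ∧
      ∀ s : I₀, f (e₀ s) = (s : I)) :
    -- (B): there is an indiscernible sequence `⟨t̄_α : α < μ⟩` in `I` over `I₀`
    -- realizing the same finite quantifier-free types over `I₀` as `⟨t̄¹_α : α < ∂⟩`
    ∃ t2 : Ordinal.{u} → Θ → I,
      IndiscBdd I₀ μ.ord t2 ∧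
      ∀ n : ℕ, SameQfType2 I₀ (fun b => e₀ b)
        (fun q : Fin (n + 1) × Θ => t2 ((q.1 : ℕ) : Ordinal.{u}) q.2)
        (fun q : Fin (n + 1) × Θ => t1 ((q.1 : ℕ) : Ordinal.{u}) q.2) :=
  stmt_12_general μ θ par I hreg h2θμ hI hii hiii hiv I₀ I₁ e₀ Θ hΘ u humono huunion t1 hind hemb
end
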